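/- Let x' be an alternating 0–1 sequence with associated real x. Then for every p ≥ 1: x'(p) = 0 if and only if the predicate [x, p] holds. (Thus, under the alternation condition, each binary digit of x is determined by a first-order ordered-ring property of the real number x.) -/

import Mathlib

/-- `x'` is a 0–1 sequence: defined on positive integers with values in {0,1}. -/
def IsZeroOne (x' : ℕ → ℕ) : Prop := ∀ i, 1 ≤ i → x' i = 0 ∨ x' i = 1

/-- The real number associated to a 0–1 sequence: `Σ_{i=1}^∞ x'(i)·2^{-i}`. -/
noncomputable def assocReal (x' : ℕ → ℕ) : ℝ := ∑' i : ℕ, (x' (i + 1) : ℝ) / 2 ^ (i + 1)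

/-- A real `y` is `p`-rational if `y·2^p` is a natural number. -/
def IsPRational (p : ℕ) (y : ℝ) : Prop := ∃ q : ℕ, y * 2 ^ p = (q : ℝ)

/-- The predicate `[x, p]` (for `p ≥ 1`): there is a `(p-1)`-rational `y` with
`0 < x - y < 1/2^p`. -/
def BracketPred (x : ℝ) (p : ℕ) : Prop :=
  ∃ y : ℝ, IsPRational (p - 1) y ∧ 0 < x - y ∧ x - y < 1 / 2 ^ p

/-- A 0–1 sequence is alternating if `x'(4m+1) = 0` and `x'(4m+3) = 1` for all `m`. -/
def Alternating (x' : ℕ → ℕ) : Prop := ∀ m : ℕ, x' (4 * m + 1) = 0 ∧ x' (4 * m + 3) = 1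

/-!
Write `2^(p-1) x = N + x'(p)/2 + s`, where the integer `N` comes from the first `p - 1` digits
and `s = 2^(p-1) · Σ_{i>p} x'(i) 2^(-i)`. Alternation puts both a `1` and a `0` after every
position, so `0 < s < 1/2` strictly. Hence `2^(p-1) x` lies strictly between an integer and that
integer plus `1/2` exactly when `x'(p) = 0`, and this is what `[x, p]` says after scaling by
`2^(p-1)`.
-/

noncomputable def binaryTail (x' : ℕ → ℕ) (n : ℕ) : ℝ :=
  ∑' k : ℕ, (x' (k + n + 1) : ℝ) / 2 ^ (k + n + 1)

lemma tsum_half_pow_add_succ (n : ℕ) :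
    ∑' k : ℕ, ((1 : ℝ) / 2) ^ (k + n + 1) = (1 / 2) ^ n := by
  simp_rw [add_assoc, pow_add _ _ (n + 1), tsum_mul_right, tsum_geometric_two]
  ring

lemma summable_half_pow_add (n : ℕ) : Summable fun k : ℕ => ((1 : ℝ) / 2) ^ (k + n) :=
  (summable_nat_add_iff n).mpr summable_geometric_two

lemma exists_natCast_mul_two_pow_eq_sum (x' : ℕ → ℕ) (n : ℕ) :
    ∃ N : ℕ, (∑ i ∈ Finset.range n, (x' (i + 1) : ℝ) / 2 ^ (i + 1)) * 2 ^ n = N := by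
  refine ⟨∑ i ∈ Finset.range n, x' (i + 1) * 2 ^ (n - (i + 1)), ?_⟩
  push_cast
  rw [Finset.sum_mul]
  refine Finset.sum_congr rfl fun i hi => ?_
  rw [← pow_sub_mul_pow (2 : ℝ) (Finset.mem_range.mp hi : i + 1 ≤ n)]
  field_simp

namespace IsZeroOne

variable {x' : ℕ → ℕ}

lemma term_le (hx' : IsZeroOne x') (i : ℕ) :
    (x' (i + 1) : ℝ) / 2 ^ (i + 1) ≤ (1 / 2) ^ (i + 1) := by
  have : (x' (i + 1) : ℝ) ≤ 1 := by
    rcases hx' (i + 1) (Nat.le_add_left 1 i) with h | h <;> simp [h]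
  rw [div_pow, one_pow]
  gcongr

lemma summable (hx' : IsZeroOne x') :
    Summable fun i : ℕ => (x' (i + 1) : ℝ) / 2 ^ (i + 1) :=
  .of_nonneg_of_le (fun _ => by positivity) hx'.term_le (summable_half_pow_add 1)

lemma summable_tail (hx' : IsZeroOne x') (n : ℕ) :
    Summable fun k : ℕ => (x' (k + n + 1) : ℝ) / 2 ^ (k + n + 1) :=
  (summable_nat_add_iff n).mpr hx'.summable

lemma assocReal_eq_sum_add_binaryTail (hx' : IsZeroOne x') (n : ℕ) :
    assocReal x' = ∑ i ∈ Finset.range n, (x' (i + 1) : ℝ) / 2 ^ (i + 1) + binaryTail x' n :=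
  (hx'.summable.sum_add_tsum_nat_add n).symm

lemma binaryTail_eq_add (hx' : IsZeroOne x') (n : ℕ) :
    binaryTail x' n = (x' (n + 1) : ℝ) / 2 ^ (n + 1) + binaryTail x' (n + 1) := by
  rw [binaryTail, (hx'.summable_tail n).tsum_eq_zero_add, binaryTail, zero_add]
  simp only [add_right_comm _ 1 n, add_assoc]

lemma binaryTail_pos (hx' : IsZeroOne x') {n k : ℕ} (hk : x' (k + n + 1) = 1) :
    0 < binaryTail x' n :=
  (hx'.summable_tail n).tsum_pos (fun _ => by positivity) k (by rw [hk]; positivity)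

lemma binaryTail_lt (hx' : IsZeroOne x') {n k : ℕ} (hk : x' (k + n + 1) = 0) :
    binaryTail x' n < 1 / 2 ^ n := by
  rw [← one_div_pow, ← tsum_half_pow_add_succ]
  refine Summable.tsum_lt_tsum (fun i => hx'.term_le (i + n)) ?_ (hx'.summable_tail n)
    (summable_half_pow_add (n + 1)) (i := k)
  rw [hk, Nat.cast_zero, zero_div]
  positivity

end IsZeroOne

lemma bracketPred_succ_iff (x : ℝ) (q : ℕ) :
    BracketPred x (q + 1) ↔ ∃ r : ℕ, 0 < x * 2 ^ q - r ∧ x * 2 ^ q - r < 1 / 2 := by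
  have h2q : (0 : ℝ) < 2 ^ q := by positivity
  constructor
  · rintro ⟨y, ⟨r, hr⟩, h0, h1⟩
    rw [Nat.add_sub_cancel] at hr
    refine ⟨r, ?_, ?_⟩
    · rw [← hr, ← sub_mul]; positivity
    · rw [← hr, ← sub_mul]
      calc (x - y) * 2 ^ q < 1 / 2 ^ (q + 1) * 2 ^ q := by gcongr
        _ = 1 / 2 := by field_simp; ring
  · rintro ⟨r, h0, h1⟩
    have hdiff : x - r / 2 ^ q = (x * 2 ^ q - r) / 2 ^ q := by field_simp
    refine ⟨r / 2 ^ q, ⟨r, by rw [Nat.add_sub_cancel]; field_simp⟩, ?_, ?_⟩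
    · rw [hdiff]; positivity
    · calc x - r / 2 ^ q = (x * 2 ^ q - r) / 2 ^ q := hdiff
        _ < 1 / 2 / 2 ^ q := by gcongr
        _ = 1 / 2 ^ (q + 1) := by rw [pow_succ]; field_simp

lemma exists_nat_sub_pos_lt_half_iff {N d : ℕ} (hd : d ≤ 1) {s : ℝ} (hs0 : 0 < s)
    (hs : s < 1 / 2) :
    (∃ r : ℕ, 0 < N + d / 2 + s - r ∧ N + d / 2 + s - r < 1 / 2) ↔ d = 0 := by
  constructor
  · rintro ⟨r, h0, h1⟩
    by_contra hd0
    obtain rfl : d = 1 := by omega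
    push_cast at h0 h1
    rcases le_or_gt r N with h | h
    · have : (r : ℝ) ≤ N := by exact_mod_cast h
      linarith
    · have : (N : ℝ) + 1 ≤ r := by exact_mod_cast h
      linarith
  · rintro rfl
    exact ⟨N, by simpa using hs0, by simpa using hs⟩

namespace Alternating

variable {x' : ℕ → ℕ}

lemma binaryTail_pos (halt : Alternating x') (hx' : IsZeroOne x') (n : ℕ) :
    0 < binaryTail x' n :=
  hx'.binaryTail_pos (k := 3 * n + 2) (by convert (halt n).2 using 2; ring)

lemma binaryTail_lt (halt : Alternating x') (hx' : IsZeroOne x') (n : ℕ) :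
    binaryTail x' n < 1 / 2 ^ n :=
  hx'.binaryTail_lt (k := 3 * n) (by convert (halt n).1 using 2; ring)

end Alternating

/-- If `x'` is alternating, then for every `p ≥ 1`, `x'(p) = 0` iff `[x, p]` holds. -/
theorem stmt13 (x' : ℕ → ℕ) (hx' : IsZeroOne x') (x : ℝ) (hx : x = assocReal x')
    (halt : Alternating x') :
    ∀ p : ℕ, 1 ≤ p → (x' p = 0 ↔ BracketPred x p) := by
  intro p hp
  obtain ⟨q, rfl⟩ := Nat.exists_eq_add_of_le' hp
  obtain ⟨N, hN⟩ := exists_natCast_mul_two_pow_eq_sum x' q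
  have hscaled : x * 2 ^ q = N + x' (q + 1) / 2 + binaryTail x' (q + 1) * 2 ^ q := by
    rw [hx, hx'.assocReal_eq_sum_add_binaryTail q, hx'.binaryTail_eq_add q, ← hN, pow_succ]
    field_simp
    ring
  have hs0 : 0 < binaryTail x' (q + 1) * 2 ^ q :=
    mul_pos (halt.binaryTail_pos hx' (q + 1)) (by positivity)
  have hs1 : binaryTail x' (q + 1) * 2 ^ q < 1 / 2 := by
    calc binaryTail x' (q + 1) * 2 ^ q < 1 / 2 ^ (q + 1) * 2 ^ q := by
          gcongr; exact halt.binaryTail_lt hx' (q + 1)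
      _ = 1 / 2 := by rw [pow_succ]; field_simp
  have hdigit : x' (q + 1) ≤ 1 := by rcases hx' (q + 1) hp with h | h <;> omega
  rw [bracketPred_succ_iff, hscaled, exists_nat_sub_pos_lt_half_iff hdigit hs0 hs1]
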